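/- arXiv:2008.07969 — 2 statements merged into one kernel-verified Lean document; each statement's English description precedes it below -/
import Mathlib

section
/- For all natural numbers n and l with l ≤ n, the identity l! * S(n,l) = Σ_{k=0}^{n} A(n,k) * C(k, n-l) holds, where A(n,k) is the Eulerian number counting permutations of {1,...,n} with exactly k ascents. -/
/-- Stirling numbers of the second kind. -/
def stirling2 : ℕ → ℕ → ℕ
  | 0, 0 => 1
  | 0, _ + 1 => 0
  | _ + 1, 0 => 0
  | n + 1, k + 1 => (k + 1) * stirling2 n (k + 1) + stirling2 n k

/-- The number of ascents of a permutation `π` of `Fin n`: the number of indices `t`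
with `π(t) < π(t+1)`. -/
def ascents (n : ℕ) (π : Equiv.Perm (Fin n)) : ℕ :=
  ((Finset.univ : Finset (Fin n × Fin n)).filter
    (fun t => (t.1 : ℕ) + 1 = (t.2 : ℕ) ∧ π t.1 < π t.2)).card

/-- The Eulerian number `A(n,k)`: the number of permutations of `{1,...,n}` with
exactly `k` ascents. -/
def eulerian (n k : ℕ) : ℕ :=
  Fintype.card {π : Equiv.Perm (Fin n) // ascents n π = k}

/-!
Insert the new maximum `n` into one of the `n + 1` slots of a permutation `σ` of `Fin n` with
`a` ascents. In the `a + 1` slots at the front or inside an ascent the number of ascents stays `a`;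
in the other `n - a` slots it becomes `a + 1`. Hence `F n m = ∑_π C(asc π, m)` satisfies
`F (n + 1) (j + 1) = (n - j) * (F n j + F n (j + 1))`, which for `n - j = l + 1` is the recurrence
`S(n + 1, l + 1) = (l + 1) S(n, l + 1) + S(n, l)` multiplied by `(l + 1)!`.
-/

open Finset Equiv

def ascentSet (w : ℕ → ℕ) (m : ℕ) : Finset ℕ :=
  {s ∈ range (m - 1) | w s < w (s + 1)}

def insertAt (w : ℕ → ℕ) (p x : ℕ) (j : ℕ) : ℕ :=
  if j < p then w j else if j = p then x else w (j - 1)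

section Word

variable {w : ℕ → ℕ} {m p x s j : ℕ}

theorem mem_ascentSet : s ∈ ascentSet w m ↔ s + 1 < m ∧ w s < w (s + 1) := by
  rw [ascentSet, mem_filter, mem_range]
  omega

theorem ascentSet_congr {w' : ℕ → ℕ} (h : ∀ j < m, w j = w' j) :
    ascentSet w m = ascentSet w' m :=
  filter_congr fun s hs => by rw [mem_range] at hs; rw [h s (by omega), h (s + 1) (by omega)]

theorem insertAt_of_lt (h : j < p) : insertAt w p x j = w j := if_pos h

@[simp] theorem insertAt_self : insertAt w p x p = x := by simp [insertAt]

theorem insertAt_succ_of_le (h : p ≤ j) : insertAt w p x (j + 1) = w j := by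
  simp [insertAt, show ¬ j + 1 < p by omega, show j + 1 ≠ p by omega]

theorem ascentSet_insertAt_zero (hw : ∀ j < m, w j < x) :
    ascentSet (insertAt w 0 x) (m + 1) = (ascentSet w m).map (addRightEmbedding 1) := by
  ext s
  simp only [mem_ascentSet, mem_map, addRightEmbedding_apply]
  constructor
  · rintro ⟨hs, hlt⟩
    obtain _ | t := s
    · rw [insertAt_self, insertAt_succ_of_le le_rfl] at hlt
      exact absurd (hw 0 (by omega)) hlt.not_gt
    · rw [insertAt_succ_of_le (by omega), insertAt_succ_of_le (by omega)] at hlt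
      exact ⟨t, ⟨by omega, hlt⟩, rfl⟩
  · rintro ⟨t, ⟨ht, hlt⟩, rfl⟩
    rw [insertAt_succ_of_le (by omega), insertAt_succ_of_le (by omega)]
    exact ⟨by omega, hlt⟩

theorem ascentSet_insertAt_succ (hp : p < m) (hw : ∀ j < m, w j < x) :
    ascentSet (insertAt w (p + 1) x) (m + 1) =
      insert p ((ascentSet w m).image fun s => if s ≤ p then s else s + 1) := by
  ext s
  simp only [mem_ascentSet, mem_insert, mem_image]
  constructor
  · rintro ⟨hs, hlt⟩
    rcases lt_trichotomy s p with h | rfl | h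
    · rw [insertAt_of_lt (by omega), insertAt_of_lt (by omega)] at hlt
      exact Or.inr ⟨s, ⟨by omega, hlt⟩, if_pos h.le⟩
    · exact Or.inl rfl
    obtain ⟨j, rfl⟩ : ∃ j, s = j + 1 := ⟨s - 1, by omega⟩
    rcases (by omega : j = p ∨ p < j) with rfl | h'
    · rw [insertAt_self, insertAt_succ_of_le (by omega)] at hlt
      exact absurd (hw (j + 1) (by omega)) hlt.not_gt
    · rw [insertAt_succ_of_le (by omega), insertAt_succ_of_le (by omega)] at hlt
      exact Or.inr ⟨j, ⟨by omega, hlt⟩, if_neg (by omega)⟩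
  · rintro (rfl | ⟨t, ⟨ht, hlt⟩, rfl⟩)
    · rw [insertAt_of_lt (by omega), insertAt_self]
      exact ⟨by omega, hw s hp⟩
    split_ifs with h
    · rcases h.lt_or_eq with h | rfl
      · rw [insertAt_of_lt (by omega), insertAt_of_lt (by omega)]
        exact ⟨by omega, hlt⟩
      · rw [insertAt_of_lt (by omega), insertAt_self]
        exact ⟨by omega, hw t (by omega)⟩
    · rw [insertAt_succ_of_le (by omega), insertAt_succ_of_le (by omega)]
      exact ⟨by omega, hlt⟩

theorem ascentSet_subset_range : ascentSet w m ⊆ range m := fun s hs => by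
  rw [mem_ascentSet] at hs; rw [mem_range]; omega

theorem card_ascentSet_le : #(ascentSet w m) ≤ m - 1 :=
  (card_le_card (filter_subset _ _)).trans_eq (card_range _)

theorem card_ascentSet_insertAt_succ (hp : p < m) (hw : ∀ j < m, w j < x) :
    #(ascentSet (insertAt w (p + 1) x) (m + 1)) =
      if p ∈ ascentSet w m then #(ascentSet w m) else #(ascentSet w m) + 1 := by
  have hinj : Function.Injective fun s => if s ≤ p then s else s + 1 := fun a b => by
    dsimp only; split_ifs <;> omega
  have hmem : p ∈ (ascentSet w m).image (fun s => if s ≤ p then s else s + 1) ↔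
      p ∈ ascentSet w m := by
    simpa using hinj.mem_finset_image (s := ascentSet w m) (a := p)
  simp only [ascentSet_insertAt_succ hp hw, card_insert_eq_ite, hmem,
    card_image_of_injective _ hinj]

theorem sum_card_ascentSet_insertAt {M : Type*} [AddCommMonoid M] (f : ℕ → M)
    (hw : ∀ j < m, w j < x) :
    ∑ p ∈ range (m + 1), f #(ascentSet (insertAt w p x) (m + 1)) =
      (#(ascentSet w m) + 1) • f #(ascentSet w m) +
        (m - #(ascentSet w m)) • f (#(ascentSet w m) + 1) := by
  set A := ascentSet w m
  have hsucc : ∀ i ∈ range m, f #(ascentSet (insertAt w (i + 1) x) (m + 1)) =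
      if i ∈ A then f #A else f (#A + 1) := fun i hi => by
    rw [card_ascentSet_insertAt_succ (mem_range.1 hi) hw]; split_ifs <;> rfl
  rw [sum_range_succ', ascentSet_insertAt_zero hw, card_map, sum_congr rfl hsucc, sum_ite,
    sum_const, sum_const, filter_mem_eq_inter, inter_eq_right.2 ascentSet_subset_range,
    filter_notMem_eq_sdiff, card_sdiff_of_subset ascentSet_subset_range, card_range, succ_nsmul]
  abel

end Word

section Perm

variable {n : ℕ}

def oneLine (π : Perm (Fin n)) (j : ℕ) : ℕ :=
  if h : j < n then π ⟨j, h⟩ else 0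

-- In one-line notation, `insertMax σ p` is `σ` with the letter `n` inserted at position `p`.
def insertMax (σ : Perm (Fin n)) (p : Fin (n + 1)) : Perm (Fin (n + 1)) :=
  ((finSuccEquiv' p).trans (optionCongr σ)).trans (finSuccEquiv' (Fin.last n)).symm

theorem oneLine_lt (π : Perm (Fin n)) {j : ℕ} (hj : j < n) : oneLine π j < n := by
  simp [oneLine, hj]

@[simp] theorem oneLine_val (π : Perm (Fin n)) (i : Fin n) : oneLine π i = π i := by
  simp [oneLine]

theorem ascents_eq_card_ascentSet (π : Perm (Fin n)) :
    ascents n π = #(ascentSet (oneLine π) n) := by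
  refine card_bij (fun t _ => t.1) (fun t ht => ?_) (fun t ht t' ht' h => ?_) (fun s hs => ?_)
  · simp only [mem_filter, mem_univ, true_and] at ht
    rw [mem_ascentSet]
    simp [oneLine, ht.1, ht.2]
  · simp only [mem_filter, mem_univ, true_and] at ht ht'
    ext <;> omega
  · rw [mem_ascentSet] at hs
    refine ⟨(⟨s, by omega⟩, ⟨s + 1, hs.1⟩), ?_, rfl⟩
    simpa [oneLine, hs.1, show s < n by omega] using hs.2

@[simp] theorem insertMax_self (σ : Perm (Fin n)) (p : Fin (n + 1)) :
    insertMax σ p p = Fin.last n := by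
  simp [insertMax]

@[simp] theorem insertMax_succAbove (σ : Perm (Fin n)) (p : Fin (n + 1)) (i : Fin n) :
    insertMax σ p (p.succAbove i) = (σ i).castSucc := by
  simp [insertMax]

theorem oneLine_insertMax (σ : Perm (Fin n)) (p : Fin (n + 1)) {j : ℕ} (hj : j < n + 1) :
    oneLine (insertMax σ p) j = insertAt (oneLine σ) p n j := by
  obtain h | ⟨i, h⟩ := Fin.eq_self_or_eq_succAbove p ⟨j, hj⟩ <;>
    obtain rfl : j = _ := congrArg Fin.val h
  · rw [oneLine_val, insertMax_self, insertAt_self, Fin.val_last]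
  · rw [oneLine_val, insertMax_succAbove, Fin.val_castSucc, ← oneLine_val]
    rcases Fin.castSucc_lt_or_lt_succ p i with hi | hi
    · rw [Fin.succAbove_of_castSucc_lt _ _ hi, Fin.val_castSucc,
        insertAt_of_lt (show (i : ℕ) < p from hi)]
    · rw [Fin.succAbove_of_lt_succ _ _ hi, Fin.val_succ,
        insertAt_succ_of_le (Nat.lt_succ_iff.1 hi)]

theorem ascents_insertMax (σ : Perm (Fin n)) (p : Fin (n + 1)) :
    ascents (n + 1) (insertMax σ p) = #(ascentSet (insertAt (oneLine σ) p n) (n + 1)) := by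
  rw [ascents_eq_card_ascentSet, ascentSet_congr fun j hj => oneLine_insertMax σ p hj]

theorem insertMax_bijective (n : ℕ) :
    Function.Bijective fun σp : Perm (Fin n) × Fin (n + 1) => insertMax σp.1 σp.2 := by
  rw [Fintype.bijective_iff_injective_and_card]
  refine ⟨fun ⟨σ, p⟩ ⟨σ', p'⟩ h => ?_,
    by simp [Fintype.card_perm, Nat.factorial_succ, mul_comm]⟩
  dsimp only at h
  obtain rfl : p = p' := (insertMax σ p).injective (by rw [insertMax_self, h, insertMax_self])
  have : σ = σ' := Equiv.ext fun i => Fin.castSucc_injective n <| by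
    rw [← insertMax_succAbove, h, insertMax_succAbove]
  rw [this]

theorem ascents_le (π : Perm (Fin n)) : ascents n π ≤ n - 1 :=
  (ascents_eq_card_ascentSet π).trans_le card_ascentSet_le

theorem sum_perm_succ_comp_ascents {M : Type*} [AddCommMonoid M] (f : ℕ → M) :
    ∑ π : Perm (Fin (n + 1)), f (ascents (n + 1) π) =
      ∑ σ : Perm (Fin n), ((ascents n σ + 1) • f (ascents n σ) +
        (n - ascents n σ) • f (ascents n σ + 1)) := by
  rw [← (Equiv.ofBijective _ (insertMax_bijective n)).sum_comp, Fintype.sum_prod_type]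
  refine sum_congr rfl fun σ _ => ?_
  simp only [Equiv.ofBijective_apply, ascents_insertMax, ascents_eq_card_ascentSet σ]
  rw [Fin.sum_univ_eq_sum_range (fun p => f #(ascentSet (insertAt (oneLine σ) p n) (n + 1))),
    sum_card_ascentSet_insertAt f fun j hj => oneLine_lt σ hj]

theorem sum_eulerian_smul {M : Type*} [AddCommMonoid M] (f : ℕ → M) :
    ∑ k ∈ range (n + 1), eulerian n k • f k = ∑ π : Perm (Fin n), f (ascents n π) := by
  rw [← sum_fiberwise_of_maps_to (g := ascents n) (t := range (n + 1))
    fun π _ => mem_range.2 (by have := ascents_le π; omega)]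
  refine sum_congr rfl fun k _ => ?_
  rw [sum_congr rfl fun π hπ => congrArg f (mem_filter.1 hπ).2, sum_const, eulerian,
    Fintype.card_subtype]

end Perm

theorem stirling2_eq_stirlingSecond : stirling2 = Nat.stirlingSecond := by
  funext n k
  induction n generalizing k with
  | zero => cases k <;> rfl
  | succ n ih => cases k <;> simp [stirling2, Nat.stirlingSecond_succ_succ, ih]

theorem succ_mul_choose_add_sub_mul_succ_choose {n a j : ℕ} (ha : a ≤ n) (hj : j ≤ n) :
    (a + 1) * a.choose (j + 1) + (n - a) * (a + 1).choose (j + 1) =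
      (n - j) * (a.choose j + a.choose (j + 1)) := by
  have hrec : ((a.choose (j + 1) : ℤ)) * (j + 1) = a.choose j * ((a : ℤ) - j) := by
    rcases le_or_gt j a with h | h
    · have := Nat.choose_succ_right_eq a j
      zify [h] at this
      exact this
    · simp [Nat.choose_eq_zero_of_lt h, Nat.choose_eq_zero_of_lt (h.trans (Nat.lt_succ_self j))]
  rw [Nat.choose_succ_succ]
  zify [ha, hj]
  linear_combination hrec

theorem sum_perm_succ_choose_ascents (n : ℕ) {j : ℕ} (hj : j ≤ n) :
    ∑ π : Perm (Fin (n + 1)), (ascents (n + 1) π).choose (j + 1) =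
      (n - j) * (∑ σ : Perm (Fin n), (ascents n σ).choose j +
        ∑ σ : Perm (Fin n), (ascents n σ).choose (j + 1)) := by
  rw [sum_perm_succ_comp_ascents fun a => a.choose (j + 1), ← sum_add_distrib, mul_sum]
  refine sum_congr rfl fun σ _ => ?_
  rw [smul_eq_mul, smul_eq_mul,
    succ_mul_choose_add_sub_mul_succ_choose ((ascents_le σ).trans (Nat.sub_le n 1)) hj]

theorem factorial_mul_stirling2_eq_sum_choose_ascents {n l : ℕ} (h : l ≤ n) :
    l.factorial * stirling2 n l = ∑ π : Perm (Fin n), (ascents n π).choose (n - l) := by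
  rw [stirling2_eq_stirlingSecond]
  induction n generalizing l with
  | zero => obtain rfl := Nat.le_zero.1 h; simp
  | succ n ih =>
    obtain rfl | hl := h.eq_or_lt
    · simp [Nat.stirlingSecond_self, Fintype.card_perm]
    obtain _ | l := l
    · rw [Nat.stirlingSecond_succ_zero, mul_zero, Nat.sub_zero]
      refine (sum_eq_zero fun π _ => Nat.choose_eq_zero_of_lt ?_).symm
      have := ascents_le π
      omega
    have ih₀ := ih (l := l) (by omega)
    have ih₁ := ih (l := l + 1) (by omega)
    rw [show n - l = n - (l + 1) + 1 by omega] at ih₀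
    rw [Nat.add_sub_add_right, show n - l = n - (l + 1) + 1 by omega,
      sum_perm_succ_choose_ascents n (Nat.sub_le n (l + 1)),
      show n - (n - (l + 1)) = l + 1 by omega,
      ← ih₀, ← ih₁, Nat.stirlingSecond_succ_succ, Nat.factorial_succ]
    ring

theorem factorial_mul_stirling_eq_sum_eulerian (n l : ℕ) (h : l ≤ n) :
    Nat.factorial l * stirling2 n l =
      ∑ k ∈ Finset.range (n + 1), eulerian n k * Nat.choose k (n - l) := by
  simp only [← smul_eq_mul, sum_eulerian_smul]
  exact factorial_mul_stirling2_eq_sum_choose_ascents h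
end

section
/- Define S(n) = Σ_{k=1}^{n} C(n,k) * (k! * S2(n,k))^2, where S2 denotes Stirling numbers of the second kind. Then for all n > 2, S(n) > n^{1.5 n}. -/
/-- `S(n) = Σ_{k=1}^{n} C(n,k) * (k! * S2(n,k))^2`. -/
def coverCount (n : ℕ) : ℕ :=
  ∑ k ∈ Finset.Icc 1 n, Nat.choose n k * (Nat.factorial k * stirling2 n k) ^ 2

/-!
Counting maps `Fin n → Fin n` by the size `k` of their image gives
`∑ₖ C(n,k) · k! · S2(n,k) = nⁿ`, the expansion of `xⁿ` in falling factorials at `x = n`.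
Cauchy–Schwarz with weights `C(n,k)`, whose sum is `2ⁿ`, gives `n²ⁿ ≤ 2ⁿ S(n)`.
Squaring, `S(n)² ≥ n⁴ⁿ / 4ⁿ > n³ⁿ` as soon as `n > 4`; the cases `n = 3, 4` are computed.
-/

open Finset Nat

theorem stirling2_eq_stirlingSecond_s3 : ∀ n k : ℕ, stirling2 n k = stirlingSecond n k
  | 0, 0 | 0, _ + 1 | _ + 1, 0 => rfl
  | n + 1, k + 1 => by
    rw [stirling2, stirlingSecond_succ_succ, stirling2_eq_stirlingSecond_s3 n k,
      stirling2_eq_stirlingSecond_s3 n (k + 1)]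

theorem Nat.mul_descFactorial (x k : ℕ) :
    x * x.descFactorial k = x.descFactorial (k + 1) + k * x.descFactorial k := by
  rcases le_or_gt k x with h | h
  · rw [descFactorial_succ, ← add_mul, Nat.sub_add_cancel h]
  · simp [descFactorial_of_lt h]

theorem Nat.pow_eq_sum_descFactorial_mul_stirlingSecond (x : ℕ) : ∀ n : ℕ,
    x ^ n = ∑ k ∈ range (n + 1), x.descFactorial k * stirlingSecond n k
  | 0 => by simp
  | n + 1 => by
    set g : ℕ → ℕ := fun k => k * x.descFactorial k * stirlingSecond n k
    have shift : ∑ k ∈ range (n + 1), g k = ∑ k ∈ range (n + 1), g (k + 1) := calc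
      _ = ∑ k ∈ range (n + 2), g k := by
        simp [g, sum_range_succ _ (n + 1), stirlingSecond_eq_zero_of_lt (lt_succ_self n)]
      _ = _ := by simp [g, sum_range_succ']
    calc x ^ (n + 1) = ∑ k ∈ range (n + 1), x * x.descFactorial k * stirlingSecond n k := by
          rw [pow_succ', pow_eq_sum_descFactorial_mul_stirlingSecond x n, mul_sum]
          simp only [mul_assoc]
      _ = ∑ k ∈ range (n + 1), x.descFactorial (k + 1) * stirlingSecond n k
            + ∑ k ∈ range (n + 1), g k := by
          rw [← sum_add_distrib]
          refine sum_congr rfl fun k _ => ?_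
          rw [mul_descFactorial]
          ring
      _ = ∑ k ∈ range (n + 2), x.descFactorial k * stirlingSecond (n + 1) k := by
          rw [shift, ← sum_add_distrib, sum_range_succ' _ (n + 1)]
          simp only [stirlingSecond_succ_succ, stirlingSecond_succ_zero, mul_zero, add_zero, g]
          refine sum_congr rfl fun k _ => ?_
          ring

theorem Nat.sum_choose_mul_factorial_mul_stirlingSecond (n : ℕ) :
    ∑ k ∈ range (n + 1), n.choose k * (k ! * stirlingSecond n k) = n ^ n := by
  rw [pow_eq_sum_descFactorial_mul_stirlingSecond]
  refine sum_congr rfl fun k _ => ?_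
  rw [descFactorial_eq_factorial_mul_choose]
  ring

theorem coverCount_eq_sum_range {n : ℕ} (hn : n ≠ 0) :
    coverCount n = ∑ k ∈ range (n + 1), n.choose k * (k ! * stirlingSecond n k) ^ 2 := by
  obtain ⟨m, rfl⟩ := exists_eq_succ_of_ne_zero hn
  rw [range_eq_Ico, sum_eq_sum_Ico_succ_bot (add_one_pos _), zero_add, Ico_add_one_right_eq_Icc]
  simp [coverCount, stirling2_eq_stirlingSecond_s3]

theorem pow_sq_le_two_pow_mul_coverCount {n : ℕ} (hn : n ≠ 0) :
    (n ^ n) ^ 2 ≤ 2 ^ n * coverCount n := by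
  rw [← sum_choose_mul_factorial_mul_stirlingSecond, ← sum_range_choose, coverCount_eq_sum_range hn]
  exact sum_sq_le_sum_mul_sum_of_sq_le_mul _ (fun _ _ => zero_le _) (fun _ _ => zero_le _)
    fun _ _ => le_of_eq (by ring)

theorem pow_three_mul_lt_coverCount_sq {n : ℕ} (hn : 2 < n) : n ^ (3 * n) < coverCount n ^ 2 := by
  rcases lt_or_ge n 5 with h5 | h5
  · interval_cases n <;> decide
  have h4 : 4 ^ n < n ^ n := Nat.pow_lt_pow_left (by omega) (by omega)
  have hcs := pow_sq_le_two_pow_mul_coverCount (n := n) (by omega)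
  refine Nat.lt_of_mul_lt_mul_left (a := 4 ^ n) ?_
  calc 4 ^ n * n ^ (3 * n) < n ^ n * n ^ (3 * n) := by gcongr
    _ = ((n ^ n) ^ 2) ^ 2 := by ring
    _ ≤ (2 ^ n * coverCount n) ^ 2 := by gcongr
    _ = 4 ^ n * coverCount n ^ 2 := by rw [mul_pow, ← pow_mul, mul_comm n 2, pow_mul]; norm_num

theorem coverCount_gt (n : ℕ) (hn : 2 < n) :
    (n : ℝ) ^ ((1.5 : ℝ) * n) < (coverCount n : ℝ) := by
  have hsq : ((n : ℝ) ^ ((1.5 : ℝ) * n)) ^ 2 = ((n ^ (3 * n) : ℕ) : ℝ) := by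
    rw [← Real.rpow_mul_natCast n.cast_nonneg,
      show (1.5 : ℝ) * n * (2 : ℕ) = (3 * n : ℕ) by push_cast; ring, Real.rpow_natCast,
      Nat.cast_pow]
  refine (pow_lt_pow_iff_left₀ (by positivity) (by positivity) two_ne_zero).1 ?_
  rw [hsq]
  exact_mod_cast pow_three_mul_lt_coverCount_sq hn
end
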